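/- arXiv:1707.01269 — 2 statements merged into one kernel-verified Lean document; each statement's English description precedes it below -/
import Mathlib

section
/- Fix $\eta \in (0,1)$ and $p \ge 1$. There exists a constant $c > 0$ such that for all $0 \le s_1 < s_2 \le 1$, the function $h_{s_1,s_2}(t) = \int_0^t \mathbf{1}_{[s_1,s_2]}(r)\,dr$ satisfies $\|h_{s_1,s_2}\|_{W_{\eta,p}} \le c\,(s_2-s_1)^{1-\eta}$, where $\|f\|_{W_{\eta,p}}^p = \int_0^1 |f(t)|^p dt + \iint_{[0,1]^2} \frac{|f(t)-f(s)|^p}{|t-s|^{1+p\eta}}\,dt\,ds$. -/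
/-!
The primitive `h` of the indicator of `[s₁, s₂]` vanishes at `0` and satisfies
`|h t - h s| ≤ min (s₂ - s₁) |t - s|`. Hence `|h|^p ≤ δ^p` with `δ = s₂ - s₁`, and the Slobodetsky
double integral is dominated by `∫ min(δ, |u|)^p |u|^{-1-pη} du`, which scales exactly like
`δ^{p(1-η)}`: the integrand is `|u|^{p(1-η)-1}` near `0` and `δ^p |u|^{-1-pη}` near infinity.
-/

open MeasureTheory Set Interval

theorem integrable_comp_abs_of_integrableOn_Ioi {E : Type*} [NormedAddCommGroup E] {f : ℝ → E}
    (hf : IntegrableOn f (Ioi 0)) : Integrable fun x => f |x| := by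
  have hIoi : IntegrableOn (fun x => f |x|) (Ioi 0) :=
    hf.congr_fun (fun x hx => by rw [abs_of_pos hx]) measurableSet_Ioi
  have hneg : MeasurableEmbedding fun x : ℝ => -x := (Homeomorph.neg ℝ).measurableEmbedding
  have hIic : IntegrableOn (fun x => f |x|) (Iic 0) := by
    rw [← Measure.map_neg_eq_self (volume : Measure ℝ), hneg.integrableOn_map_iff]
    simp_rw [Function.comp_def, abs_neg, neg_preimage, neg_Iic, neg_zero]
    exact Iff.mpr integrableOn_Ici_iff_integrableOn_Ioi hIoi
  rw [← integrableOn_univ, ← Iic_union_Ioi (a := (0 : ℝ))]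
  exact hIic.union hIoi

section Kernel

variable {p η δ : ℝ}

lemma min_rpow_div_rpow_of_le {x : ℝ} (hx : 0 < x) (hxδ : x ≤ δ) :
    min δ x ^ p / x ^ (1 + p * η) = x ^ (p * (1 - η) - 1) := by
  rw [min_eq_right hxδ, ← Real.rpow_sub hx]; ring_nf

lemma min_rpow_div_rpow_of_lt (hδ : 0 < δ) {x : ℝ} (hδx : δ < x) :
    min δ x ^ p / x ^ (1 + p * η) = δ ^ p * x ^ (-(1 + p * η)) := by
  rw [min_eq_left hδx.le, Real.rpow_neg (hδ.trans hδx).le, div_eq_mul_inv]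

lemma integrableOn_Ioc_min_rpow_div_rpow (hp : 0 < p) (hη : η < 1) (hδ : 0 < δ) :
    IntegrableOn (fun x => min δ x ^ p / x ^ (1 + p * η)) (Ioc 0 δ) := by
  have h := intervalIntegral.intervalIntegrable_rpow' (a := 0) (b := δ)
    (r := p * (1 - η) - 1) (by nlinarith)
  rw [intervalIntegrable_iff_integrableOn_Ioc_of_le hδ.le] at h
  exact h.congr_fun (fun x hx => (min_rpow_div_rpow_of_le hx.1 hx.2).symm) measurableSet_Ioc

lemma integral_Ioc_min_rpow_div_rpow (hp : 0 < p) (hη : η < 1) (hδ : 0 < δ) :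
    ∫ x in Ioc 0 δ, min δ x ^ p / x ^ (1 + p * η) = δ ^ (p * (1 - η)) / (p * (1 - η)) := by
  have ha : 0 < p * (1 - η) := mul_pos hp (by linarith)
  rw [setIntegral_congr_fun measurableSet_Ioc fun x hx => min_rpow_div_rpow_of_le hx.1 hx.2,
    ← intervalIntegral.integral_of_le hδ.le, integral_rpow (Or.inl (by linarith)),
    sub_add_cancel, Real.zero_rpow ha.ne', sub_zero]

lemma integrableOn_Ioi_min_rpow_div_rpow_of_lt (hp : 0 < p) (hη : 0 < η) (hδ : 0 < δ) :
    IntegrableOn (fun x => min δ x ^ p / x ^ (1 + p * η)) (Ioi δ) :=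
  IntegrableOn.congr_fun ((integrableOn_Ioi_rpow_of_lt (by nlinarith) hδ).const_mul (δ ^ p))
    (fun _ hx => (min_rpow_div_rpow_of_lt hδ hx).symm) measurableSet_Ioi

lemma integral_Ioi_min_rpow_div_rpow_of_lt (hp : 0 < p) (hη : 0 < η) (hδ : 0 < δ) :
    ∫ x in Ioi δ, min δ x ^ p / x ^ (1 + p * η) = δ ^ (p * (1 - η)) / (p * η) := by
  rw [setIntegral_congr_fun measurableSet_Ioi fun x hx => min_rpow_div_rpow_of_lt hδ hx,
    integral_const_mul, integral_Ioi_rpow_of_lt (by nlinarith) hδ,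
    show -(1 + p * η) + 1 = -(p * η) by ring, Real.rpow_neg hδ.le,
    show p * (1 - η) = p - p * η by ring, Real.rpow_sub hδ]
  field_simp

lemma integrableOn_Ioi_zero_min_rpow_div_rpow (hp : 0 < p) (hη : η ∈ Ioo 0 1) (hδ : 0 < δ) :
    IntegrableOn (fun x => min δ x ^ p / x ^ (1 + p * η)) (Ioi 0) := by
  rw [← Ioc_union_Ioi_eq_Ioi hδ.le]
  exact (integrableOn_Ioc_min_rpow_div_rpow hp hη.2 hδ).union
    (integrableOn_Ioi_min_rpow_div_rpow_of_lt hp hη.1 hδ)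

lemma integral_Ioi_zero_min_rpow_div_rpow (hp : 0 < p) (hη : η ∈ Ioo 0 1) (hδ : 0 < δ) :
    ∫ x in Ioi 0, min δ x ^ p / x ^ (1 + p * η)
      = (1 / (p * (1 - η)) + 1 / (p * η)) * δ ^ (p * (1 - η)) := by
  rw [← Ioc_union_Ioi_eq_Ioi hδ.le, setIntegral_union (Ioc_disjoint_Ioi le_rfl) measurableSet_Ioi
    (integrableOn_Ioc_min_rpow_div_rpow hp hη.2 hδ)
    (integrableOn_Ioi_min_rpow_div_rpow_of_lt hp hη.1 hδ),
    integral_Ioc_min_rpow_div_rpow hp hη.2 hδ, integral_Ioi_min_rpow_div_rpow_of_lt hp hη.1 hδ]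
  ring

lemma integrable_min_abs_rpow_div_abs_rpow (hp : 0 < p) (hη : η ∈ Ioo 0 1) (hδ : 0 < δ) :
    Integrable fun u => min δ |u| ^ p / |u| ^ (1 + p * η) :=
  integrable_comp_abs_of_integrableOn_Ioi (integrableOn_Ioi_zero_min_rpow_div_rpow hp hη hδ)

lemma integral_min_abs_rpow_div_abs_rpow (hp : 0 < p) (hη : η ∈ Ioo 0 1) (hδ : 0 < δ) :
    ∫ u, min δ |u| ^ p / |u| ^ (1 + p * η)
      = 2 * (1 / (p * (1 - η)) + 1 / (p * η)) * δ ^ (p * (1 - η)) := by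
  rw [integral_comp_abs (f := fun x => min δ x ^ p / x ^ (1 + p * η)),
    integral_Ioi_zero_min_rpow_div_rpow hp hη hδ, mul_assoc]

end Kernel

theorem setIntegral_prod_le_of_le_comp_sub {s : Set ℝ} (hs : volume s ≠ ⊤) {F : ℝ × ℝ → ℝ}
    {g : ℝ → ℝ} (hF : AEStronglyMeasurable F (volume.restrict (s ×ˢ s))) (hF0 : ∀ x, 0 ≤ F x)
    (hg : Integrable g) (hFg : ∀ x, F x ≤ g (x.2 - x.1)) :
    ∫ x in s ×ˢ s, F x ≤ volume.real s * ∫ u, g u := by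
  have hg0 : ∀ u, 0 ≤ g u := fun u => by simpa using (hF0 (0, u)).trans (hFg (0, u))
  rw [integral_eq_lintegral_of_nonneg_ae (.of_forall hF0) hF, Measure.real,
    ← ENNReal.toReal_ofReal (integral_nonneg hg0), ← ENNReal.toReal_mul]
  refine ENNReal.toReal_mono (ENNReal.mul_ne_top hs ENNReal.ofReal_ne_top) ?_
  calc ∫⁻ x in s ×ˢ s, ENNReal.ofReal (F x)
      ≤ ∫⁻ x in s ×ˢ s, ENNReal.ofReal (g (x.2 - x.1)) :=
        lintegral_mono fun x => ENNReal.ofReal_le_ofReal (hFg x)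
    _ ≤ ∫⁻ x in s, ∫⁻ y in s, ENNReal.ofReal (g (y - x)) := by
        rw [Measure.volume_eq_prod, ← Measure.prod_restrict]
        exact lintegral_prod_le _
    _ ≤ ∫⁻ _ in s, ∫⁻ y, ENNReal.ofReal (g y) := lintegral_mono fun x =>
        (setLIntegral_le_lintegral _ _).trans_eq
          (lintegral_sub_right_eq_self (fun y => ENNReal.ofReal (g y)) x)
    _ = volume s * ENNReal.ofReal (∫ u, g u) := by
        rw [setLIntegral_const, ofReal_integral_eq_lintegral_ofReal hg (.of_forall hg0), mul_comm]

theorem abs_intervalIntegral_le_min {f : ℝ → ℝ} (hf : Integrable f) (hf1 : ∀ x, |f x| ≤ 1)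
    (s t : ℝ) : |∫ r in s..t, f r| ≤ min (∫ r, |f r|) |t - s| := by
  refine le_min ?_ ?_
  · calc |∫ r in s..t, f r| ≤ ∫ r in Ι s t, |f r| := by
          simpa only [Real.norm_eq_abs] using
            intervalIntegral.norm_integral_le_integral_norm_uIoc (f := f) (a := s) (b := t)
      _ ≤ ∫ r, |f r| := setIntegral_le_integral hf.abs (.of_forall fun _ => abs_nonneg _)
  · simpa using intervalIntegral.norm_integral_le_of_norm_le_const (C := 1)
      fun x _ => (Real.norm_eq_abs (f x)).trans_le (hf1 x)

theorem abs_intervalIntegral_indicator_Icc_sub_le {a b : ℝ} (hab : a ≤ b) (s t : ℝ) :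
    |(∫ r in (0:ℝ)..t, (Icc a b).indicator (fun _ => (1:ℝ)) r)
      - ∫ r in (0:ℝ)..s, (Icc a b).indicator (fun _ => (1:ℝ)) r| ≤ min (b - a) |t - s| := by
  set χ := (Icc a b).indicator fun _ => (1:ℝ)
  have hχ : Integrable χ :=
    (integrable_indicator_iff measurableSet_Icc).mpr (integrableOn_const measure_Icc_lt_top.ne)
  have hχ_abs : ∀ r, |χ r| = χ r := fun r =>
    abs_of_nonneg (indicator_nonneg (fun _ _ => zero_le_one) r)
  have hχ_le : ∀ r, |χ r| ≤ 1 := fun r =>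
    (hχ_abs r).trans_le (indicator_le' (fun _ _ => le_rfl) (fun _ _ => zero_le_one) r)
  have hχ_int : ∫ r, |χ r| = b - a := by
    simp_rw [hχ_abs, χ]
    rw [integral_indicator_const _ measurableSet_Icc, Real.volume_real_Icc_of_le hab,
      smul_eq_mul, mul_one]
  rw [intervalIntegral.integral_interval_sub_left hχ.intervalIntegrable hχ.intervalIntegrable,
    ← hχ_int]
  exact abs_intervalIntegral_le_min hχ hχ_le s t

/-- `‖f‖_{W_{η,p}}^p` on `[0, 1]`. -/
noncomputable def slobodetskyNormPow (η p : ℝ) (f : ℝ → ℝ) : ℝ :=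
  (∫ t in Icc (0:ℝ) 1, |f t| ^ p)
    + ∫ st in Icc (0:ℝ) 1 ×ˢ Icc (0:ℝ) 1, |f st.2 - f st.1| ^ p / |st.2 - st.1| ^ (1 + p * η)

theorem slobodetskyNormPow_nonneg (η p : ℝ) (f : ℝ → ℝ) : 0 ≤ slobodetskyNormPow η p f :=
  add_nonneg (integral_nonneg fun _ => by positivity) (integral_nonneg fun _ => by positivity)

theorem slobodetskyNormPow_le {η p δ : ℝ} (hp : 0 < p) (hη : η ∈ Ioo 0 1) (hδ : 0 < δ)
    (hδ1 : δ ≤ 1) {f : ℝ → ℝ} (hf0 : f 0 = 0) (hf : ∀ s t, |f t - f s| ≤ min δ |t - s|) :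
    slobodetskyNormPow η p f
      ≤ (1 + 2 * (1 / (p * (1 - η)) + 1 / (p * η))) * δ ^ (p * (1 - η)) := by
  have hf_meas : Measurable f := (LipschitzWith.continuous (K := 1) <|
    LipschitzWith.of_dist_le_mul fun t s => by
      simpa [Real.dist_eq] using (hf s t).trans (min_le_right _ _)).measurable
  have hf_le : ∀ t, |f t| ≤ δ := fun t => by
    simpa [hf0] using (hf 0 t).trans (min_le_left _ _)
  have hL : ∫ t in Icc (0:ℝ) 1, |f t| ^ p ≤ δ ^ (p * (1 - η)) := by
    have hpt : ∀ t, ‖|f t| ^ p‖ ≤ δ ^ (p * (1 - η)) := fun t => calc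
      ‖|f t| ^ p‖ = |f t| ^ p := Real.norm_of_nonneg (by positivity)
      _ ≤ δ ^ p := Real.rpow_le_rpow (abs_nonneg _) (hf_le t) hp.le
      _ ≤ δ ^ (p * (1 - η)) := Real.rpow_le_rpow_of_exponent_ge hδ hδ1 (by nlinarith [hη.1])
    calc _ ≤ ‖∫ t in Icc (0:ℝ) 1, |f t| ^ p‖ := Real.le_norm_self _
      _ ≤ δ ^ (p * (1 - η)) * volume.real (Icc (0:ℝ) 1) :=
          norm_setIntegral_le_of_norm_le_const measure_Icc_lt_top fun t _ => hpt t
      _ = δ ^ (p * (1 - η)) := by simp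
  have hW : ∫ st in Icc (0:ℝ) 1 ×ˢ Icc (0:ℝ) 1,
        |f st.2 - f st.1| ^ p / |st.2 - st.1| ^ (1 + p * η)
      ≤ 2 * (1 / (p * (1 - η)) + 1 / (p * η)) * δ ^ (p * (1 - η)) := by
    calc _ ≤ volume.real (Icc (0:ℝ) 1) * ∫ u, min δ |u| ^ p / |u| ^ (1 + p * η) :=
          setIntegral_prod_le_of_le_comp_sub measure_Icc_lt_top.ne
            (Measurable.aestronglyMeasurable (by fun_prop)) (fun _ => by positivity)
            (integrable_min_abs_rpow_div_abs_rpow hp hη hδ)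
            fun st => div_le_div_of_nonneg_right
              (Real.rpow_le_rpow (abs_nonneg _) (hf st.1 st.2) hp.le) (by positivity)
      _ = _ := by rw [integral_min_abs_rpow_div_abs_rpow hp hη hδ]; simp
  rw [slobodetskyNormPow]
  linarith

theorem stmt_1 (η p : ℝ) (hη : η ∈ Set.Ioo (0:ℝ) 1) (hp : 1 ≤ p) :
    ∃ c > 0, ∀ s₁ s₂ : ℝ, 0 ≤ s₁ → s₁ < s₂ → s₂ ≤ 1 →
      ((∫ t in Set.Icc (0:ℝ) 1,
          |∫ r in (0:ℝ)..t, (Set.Icc s₁ s₂).indicator (fun _ => (1:ℝ)) r| ^ p)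
       + ∫ st in (Set.Icc (0:ℝ) 1 ×ˢ Set.Icc (0:ℝ) 1),
          |(∫ r in (0:ℝ)..st.2, (Set.Icc s₁ s₂).indicator (fun _ => (1:ℝ)) r)
            - (∫ r in (0:ℝ)..st.1, (Set.Icc s₁ s₂).indicator (fun _ => (1:ℝ)) r)| ^ p
            / |st.2 - st.1| ^ (1 + p * η)) ^ (1/p)
      ≤ c * (s₂ - s₁) ^ (1 - η) := by
  have hp0 : 0 < p := zero_lt_one.trans_le hp
  have hη1 : 0 < 1 - η := sub_pos.mpr hη.2
  set K := 1 + 2 * (1 / (p * (1 - η)) + 1 / (p * η))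
  have hK : 0 < K := by have := hη.1; positivity
  refine ⟨K ^ (1 / p), by positivity, fun s₁ s₂ hs₁ hs₁₂ hs₂ => ?_⟩
  have hbound := slobodetskyNormPow_le hp0 hη (sub_pos.mpr hs₁₂) (by linarith)
    (f := fun t => ∫ r in (0:ℝ)..t, (Icc s₁ s₂).indicator (fun _ => (1:ℝ)) r)
    intervalIntegral.integral_same (abs_intervalIntegral_indicator_Icc_sub_le hs₁₂.le)
  calc _ ≤ (K * (s₂ - s₁) ^ (p * (1 - η))) ^ (1 / p) :=
        Real.rpow_le_rpow (slobodetskyNormPow_nonneg _ _ _) hbound (by positivity)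
    _ = K ^ (1 / p) * (s₂ - s₁) ^ (1 - η) := by
        rw [Real.mul_rpow hK.le (by positivity), ← Real.rpow_mul (by linarith)]
        field_simp
end

section
/- Let $(X_a)_{a \in \mathcal{A}}$, $\mathcal{A} = \{1,\dots,d\}\times\{1,\dots,m\}$, be independent, and fix $a \in \mathcal{A}$. Suppose for fixed $0\le s<t\le 1$ the coefficients $h^m_{a,b}(s,t)$ satisfy: if $|t-s| \le 1/m$ then at most one $b \prec a$ has $h^m_{a,b}(s,t) \ne 0$ and $|h^m_{a,b}(s,t)| \le m|t-s|^2$; if $|t-s| \ge 1/m$ then at most $\lceil dm|t-s|\rceil$ values of $b$ have $h^m_{a,b}(s,t)\ne 0$, each with $|h^m_{a,b}(s,t)| \le 1/m$. Then for i.i.d. $(U_b)$ with $\mathbb{E}|U_b|^p < \infty$, $p\ge 2$, in both cases $\mathbb{E}\big(\sum_{b\prec a} |U_b|^2 |h^m_{a,b}(s,t)|^2\big)^{p/2} \le c\, m^{-p/2}\,\mathbb{E}|U_1|^p\,|t-s|^{p/2}$. -/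
open MeasureTheory ProbabilityTheory

theorem stmt_17 (d : ℕ) (hd : 1 ≤ d) (p : ℝ) (hp : 2 ≤ p) :
    ∃ c > 0, ∀ (m : ℕ), 1 ≤ m → ∀ (a : Fin d × Fin m)
      (Ω : Type) (_ : MeasureSpace Ω) (_ : IsProbabilityMeasure (ℙ : Measure Ω))
      (U : Fin d × Fin m → Ω → ℝ),
      iIndepFun U ℙ →
      (∀ b, IdentDistrib (U b) (U a) ℙ ℙ) →
      Integrable (fun ω => |U a ω| ^ p) ℙ →
      ∀ (s t : ℝ), 0 ≤ s → s < t → t ≤ 1 →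
      ∀ (h : Fin d × Fin m → ℝ),
      (|t - s| ≤ 1 / m →
        ((Finset.univ.filter
            (fun b : Fin d × Fin m => b.1 < a.1 ∧ b.2 < a.2 ∧ h b ≠ 0)).card ≤ 1 ∧
         ∀ b : Fin d × Fin m, b.1 < a.1 → b.2 < a.2 → |h b| ≤ m * |t - s| ^ 2)) →
      (1 / m ≤ |t - s| →
        (((Finset.univ.filter
            (fun b : Fin d × Fin m => b.1 < a.1 ∧ b.2 < a.2 ∧ h b ≠ 0)).card : ℝ)
              ≤ ⌈(d : ℝ) * m * |t - s|⌉ ∧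
         ∀ b : Fin d × Fin m, b.1 < a.1 → b.2 < a.2 → |h b| ≤ 1 / m)) →
      (∫ ω, (∑ b ∈ Finset.univ.filter
            (fun b : Fin d × Fin m => b.1 < a.1 ∧ b.2 < a.2),
            |U b ω| ^ 2 * |h b| ^ 2) ^ (p / 2) ∂ℙ)
        ≤ c * (m : ℝ) ^ (-(p / 2)) * |t - s| ^ (p / 2)
            * ∫ ω, |U a ω| ^ p ∂ℙ := by
  have hd0 : (0:ℝ) < d := by exact_mod_cast hd
  have hd1 : (1:ℝ) ≤ d := by exact_mod_cast hd
  have hq1 : (1:ℝ) ≤ p / 2 := by linarith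
  have hq0 : (0:ℝ) < p / 2 := by linarith
  refine ⟨(2 * d : ℝ) ^ (p / 2), Real.rpow_pos_of_pos (by positivity) _, ?_⟩
  intro m hm a Ω _ _ U _hind hid hInt s t hs hst ht1 h hc1 hc2
  have hm0 : (0:ℝ) < m := by exact_mod_cast hm
  have hr0 : (0:ℝ) < |t - s| := abs_pos.2 (by linarith)
  set r : ℝ := |t - s| with hrdef
  set c : ℝ := (2 * d : ℝ) ^ (p / 2) with hcdef
  have hc0 : (0:ℝ) < c := Real.rpow_pos_of_pos (by positivity) _
  have hc1' : (1:ℝ) ≤ c := Real.one_le_rpow (by linarith) hq0.le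
  -- measurability / identical distribution consequences
  have hu : Measurable fun x : ℝ => |x| ^ p := measurable_id.abs.pow measurable_const
  have hidp : ∀ b, IdentDistrib (fun ω => |U b ω| ^ p) (fun ω => |U a ω| ^ p) ℙ ℙ := by
    intro b
    simpa [Function.comp_def] using (hid b).comp hu
  have hIntb : ∀ b, Integrable (fun ω => |U b ω| ^ p) ℙ :=
    fun b => (hidp b).integrable_iff.mpr hInt
  have hEqb : ∀ b, ∫ ω, |U b ω| ^ p ∂ℙ = ∫ ω, |U a ω| ^ p ∂ℙ :=
    fun b => (hidp b).integral_eq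
  set I : ℝ := ∫ ω, |U a ω| ^ p ∂ℙ with hIdef
  have hI0 : 0 ≤ I := integral_nonneg fun ω => Real.rpow_nonneg (abs_nonneg _) _
  set S : Finset (Fin d × Fin m) :=
    Finset.univ.filter (fun b : Fin d × Fin m => b.1 < a.1 ∧ b.2 < a.2 ∧ h b ≠ 0) with hSdef
  set T : Finset (Fin d × Fin m) :=
    Finset.univ.filter (fun b : Fin d × Fin m => b.1 < a.1 ∧ b.2 < a.2) with hTdef
  have hST : S ⊆ T := by
    intro b hb
    simp only [hSdef, hTdef, Finset.mem_filter, Finset.mem_univ, true_and] at hb ⊢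
    exact ⟨hb.1, hb.2.1⟩
  have hsum_eq : ∀ ω, ∑ b ∈ T, |U b ω| ^ 2 * |h b| ^ 2
      = ∑ b ∈ S, |U b ω| ^ 2 * |h b| ^ 2 := by
    intro ω
    refine (Finset.sum_subset hST ?_).symm
    intro b hbT hbS
    simp only [hSdef, hTdef, Finset.mem_filter, Finset.mem_univ, true_and, not_and, ne_eq,
      not_not] at hbT hbS
    have hb0 : h b = 0 := hbS hbT.1 hbT.2
    simp [hb0]
  -- pointwise bound
  have hbound : ∀ ω, (∑ b ∈ T, |U b ω| ^ 2 * |h b| ^ 2) ^ (p / 2)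
      ≤ (S.card : ℝ) ^ (p / 2 - 1) * ∑ b ∈ S, |h b| ^ p * |U b ω| ^ p := by
    intro ω
    rw [hsum_eq ω]
    calc (∑ b ∈ S, |U b ω| ^ 2 * |h b| ^ 2) ^ (p / 2)
        ≤ (S.card : ℝ) ^ (p / 2 - 1) * ∑ b ∈ S, (|U b ω| ^ 2 * |h b| ^ 2) ^ (p / 2) :=
          Real.rpow_sum_le_const_mul_sum_rpow_of_nonneg S hq1 (fun b _ => by positivity)
      _ = (S.card : ℝ) ^ (p / 2 - 1) * ∑ b ∈ S, |h b| ^ p * |U b ω| ^ p := by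
          congr 1
          refine Finset.sum_congr rfl fun b _ => ?_
          have h1 : |U b ω| ^ 2 * |h b| ^ 2 = (|U b ω| * |h b|) ^ (2:ℕ) := by ring
          rw [h1, ← Real.rpow_natCast (|U b ω| * |h b|) 2, ← Real.rpow_mul (by positivity),
            show ((2:ℕ):ℝ) * (p / 2) = p by push_cast; ring,
            Real.mul_rpow (abs_nonneg _) (abs_nonneg _), mul_comm]
  -- integrate
  have hgInt : Integrable
      (fun ω => (S.card : ℝ) ^ (p / 2 - 1) * ∑ b ∈ S, |h b| ^ p * |U b ω| ^ p) ℙ := by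
    refine Integrable.const_mul ?_ _
    exact integrable_finset_sum S fun b _ => (hIntb b).const_mul _
  have hLHS : (∫ ω, (∑ b ∈ T, |U b ω| ^ 2 * |h b| ^ 2) ^ (p / 2) ∂ℙ)
      ≤ ((S.card : ℝ) ^ (p / 2 - 1) * ∑ b ∈ S, |h b| ^ p) * I := by
    calc (∫ ω, (∑ b ∈ T, |U b ω| ^ 2 * |h b| ^ 2) ^ (p / 2) ∂ℙ)
        ≤ ∫ ω, (S.card : ℝ) ^ (p / 2 - 1) * ∑ b ∈ S, |h b| ^ p * |U b ω| ^ p ∂ℙ := by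
          refine integral_mono_of_nonneg (ae_of_all _ fun ω => ?_) hgInt (ae_of_all _ hbound)
          exact Real.rpow_nonneg (Finset.sum_nonneg fun b _ => by positivity) _
      _ = ((S.card : ℝ) ^ (p / 2 - 1) * ∑ b ∈ S, |h b| ^ p) * I := by
          rw [integral_const_mul, integral_finset_sum _ (fun b _ => (hIntb b).const_mul _)]
          have e : ∀ b ∈ S, ∫ ω, |h b| ^ p * |U b ω| ^ p ∂ℙ = |h b| ^ p * I := fun b _ => by
            rw [integral_const_mul, hEqb b]
          rw [Finset.sum_congr rfl e, ← Finset.sum_mul]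
          ring
  -- numeric estimate
  have key : (S.card : ℝ) ^ (p / 2 - 1) * ∑ b ∈ S, |h b| ^ p
      ≤ c * (m : ℝ) ^ (-(p / 2)) * r ^ (p / 2) := by
    rcases Nat.eq_zero_or_pos S.card with hN | hN
    · have hSe : S = ∅ := Finset.card_eq_zero.mp hN
      rw [hSe]
      simp only [Finset.sum_empty, mul_zero]
      positivity
    have hN1 : (1:ℝ) ≤ (S.card : ℝ) := by exact_mod_cast hN
    rcases le_total r (1 / (m:ℝ)) with hcase | hcase
    · -- small interval
      obtain ⟨hcard, hb⟩ := hc1 hcase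
      have hNe : S.card = 1 := le_antisymm hcard hN
      have hmr : (m:ℝ) * r ≤ 1 := by
        rw [mul_comm]
        exact (le_div_iff₀ hm0).mp hcase
      have hsum : ∑ b ∈ S, |h b| ^ p ≤ ((m:ℝ) * r ^ 2) ^ p := by
        have h2 : ∀ b ∈ S, |h b| ^ p ≤ ((m:ℝ) * r ^ 2) ^ p := by
          intro b hb'
          simp only [hSdef, Finset.mem_filter, Finset.mem_univ, true_and] at hb'
          exact Real.rpow_le_rpow (abs_nonneg _) (hb b hb'.1 hb'.2.1) (by linarith)
        have := Finset.sum_le_card_nsmul S _ _ h2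
        rw [hNe] at this
        simpa using this
      rw [hNe]
      simp only [Nat.cast_one, Real.one_rpow, one_mul]
      have heq : ((m:ℝ) * r ^ 2) ^ p
          = ((m:ℝ) * r) ^ (p + p / 2) * ((m:ℝ) ^ (-(p / 2)) * r ^ (p / 2)) := by
        have e1 : ((m:ℝ) * r ^ 2) ^ p = (m:ℝ) ^ p * r ^ (2 * p) := by
          rw [Real.mul_rpow hm0.le (by positivity), ← Real.rpow_natCast r 2,
            ← Real.rpow_mul hr0.le, show ((2:ℕ):ℝ) * p = 2 * p by push_cast; ring]
        have e2 : ((m:ℝ) * r) ^ (p + p / 2) * ((m:ℝ) ^ (-(p / 2)) * r ^ (p / 2))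
            = (m:ℝ) ^ p * r ^ (2 * p) := by
          rw [Real.mul_rpow hm0.le hr0.le]
          calc (m:ℝ) ^ (p + p / 2) * r ^ (p + p / 2) * ((m:ℝ) ^ (-(p / 2)) * r ^ (p / 2))
              = ((m:ℝ) ^ (p + p / 2) * (m:ℝ) ^ (-(p / 2)))
                  * (r ^ (p + p / 2) * r ^ (p / 2)) := by ring
            _ = (m:ℝ) ^ (p + p / 2 + -(p / 2)) * r ^ (p + p / 2 + p / 2) := by
                rw [← Real.rpow_add hm0, ← Real.rpow_add hr0]
            _ = (m:ℝ) ^ p * r ^ (2 * p) := by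
                rw [show p + p / 2 + -(p / 2) = p by ring,
                  show p + p / 2 + p / 2 = 2 * p by ring]
        rw [e1, ← e2]
      calc ∑ b ∈ S, |h b| ^ p ≤ ((m:ℝ) * r ^ 2) ^ p := hsum
        _ = ((m:ℝ) * r) ^ (p + p / 2) * ((m:ℝ) ^ (-(p / 2)) * r ^ (p / 2)) := heq
        _ ≤ 1 * ((m:ℝ) ^ (-(p / 2)) * r ^ (p / 2)) := by
            refine mul_le_mul_of_nonneg_right ?_ (by positivity)
            exact Real.rpow_le_one (by positivity) hmr (by linarith)
        _ ≤ c * ((m:ℝ) ^ (-(p / 2)) * r ^ (p / 2)) := by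
            refine mul_le_mul_of_nonneg_right hc1' (by positivity)
        _ = c * (m:ℝ) ^ (-(p / 2)) * r ^ (p / 2) := by ring
    · -- large interval
      obtain ⟨hcard, hb⟩ := hc2 hcase
      have hmr1 : (1:ℝ) ≤ (m:ℝ) * r := by
        rw [mul_comm]
        exact (div_le_iff₀ hm0).mp hcase
      have hdmr1 : (1:ℝ) ≤ (d:ℝ) * m * r := by
        calc (1:ℝ) = 1 * 1 := by ring
          _ ≤ (d:ℝ) * ((m:ℝ) * r) := by
              apply mul_le_mul (by exact_mod_cast hd) hmr1 (by norm_num) hd0.le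
          _ = (d:ℝ) * m * r := by ring
      have hNle : (S.card : ℝ) ≤ 2 * d * ((m:ℝ) * r) := by
        have h1 : ((⌈(d:ℝ) * m * r⌉ : ℤ) : ℝ) < (d:ℝ) * m * r + 1 := Int.ceil_lt_add_one _
        have := hcard.trans_lt h1
        nlinarith
      set B : ℝ := 2 * d * ((m:ℝ) * r) with hBdef
      have hB0 : (0:ℝ) < B := by positivity
      have hsum : ∑ b ∈ S, |h b| ^ p ≤ (S.card : ℝ) * (1 / (m:ℝ)) ^ p := by
        have h2 : ∀ b ∈ S, |h b| ^ p ≤ (1 / (m:ℝ)) ^ p := by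
          intro b hb'
          simp only [hSdef, Finset.mem_filter, Finset.mem_univ, true_and] at hb'
          exact Real.rpow_le_rpow (abs_nonneg _) (hb b hb'.1 hb'.2.1) (by linarith)
        have := Finset.sum_le_card_nsmul S _ _ h2
        simpa [nsmul_eq_mul] using this
      have eB : B ^ (p / 2 - 1) * B = B ^ (p / 2) := by
        have e : p / 2 = p / 2 - 1 + 1 := by ring
        conv_rhs => rw [e, Real.rpow_add_one hB0.ne']
      have eFin : B ^ (p / 2) * (1 / (m:ℝ)) ^ p = c * (m:ℝ) ^ (-(p / 2)) * r ^ (p / 2) := by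
        have hinv : (1 / (m:ℝ)) ^ p = (m:ℝ) ^ (-p) := by
          rw [one_div, ← Real.rpow_neg_one (m:ℝ), ← Real.rpow_mul hm0.le,
            show (-1:ℝ) * p = -p by ring]
        rw [hBdef, show (2:ℝ) * d * ((m:ℝ) * r) = (2 * d) * ((m:ℝ) * r) by ring,
          Real.mul_rpow (by positivity) (by positivity),
          Real.mul_rpow hm0.le hr0.le, hinv]
        calc (2 * (d:ℝ)) ^ (p / 2) * ((m:ℝ) ^ (p / 2) * r ^ (p / 2)) * (m:ℝ) ^ (-p)
            = (2 * (d:ℝ)) ^ (p / 2) * ((m:ℝ) ^ (p / 2) * (m:ℝ) ^ (-p)) * r ^ (p / 2) := by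
              ring
          _ = c * (m:ℝ) ^ (-(p / 2)) * r ^ (p / 2) := by
              rw [← Real.rpow_add hm0, show p / 2 + -p = -(p / 2) by ring, hcdef]
      calc (S.card : ℝ) ^ (p / 2 - 1) * ∑ b ∈ S, |h b| ^ p
          ≤ (S.card : ℝ) ^ (p / 2 - 1) * ((S.card : ℝ) * (1 / (m:ℝ)) ^ p) := by
            refine mul_le_mul_of_nonneg_left hsum ?_
            exact Real.rpow_nonneg (Nat.cast_nonneg _) _
        _ = ((S.card : ℝ) ^ (p / 2 - 1) * (S.card : ℝ)) * (1 / (m:ℝ)) ^ p := by ring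
        _ ≤ (B ^ (p / 2 - 1) * B) * (1 / (m:ℝ)) ^ p := by
            refine mul_le_mul_of_nonneg_right ?_ (by positivity)
            refine mul_le_mul ?_ hNle (by positivity) (by positivity)
            exact Real.rpow_le_rpow (Nat.cast_nonneg _) hNle (by linarith)
        _ = B ^ (p / 2) * (1 / (m:ℝ)) ^ p := by rw [eB]
        _ = c * (m:ℝ) ^ (-(p / 2)) * r ^ (p / 2) := eFin
  calc (∫ ω, (∑ b ∈ T, |U b ω| ^ 2 * |h b| ^ 2) ^ (p / 2) ∂ℙ)
      ≤ ((S.card : ℝ) ^ (p / 2 - 1) * ∑ b ∈ S, |h b| ^ p) * I := hLHS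
    _ ≤ (c * (m:ℝ) ^ (-(p / 2)) * r ^ (p / 2)) * I := mul_le_mul_of_nonneg_right key hI0
    _ = c * (m:ℝ) ^ (-(p / 2)) * r ^ (p / 2) * I := by ring
end
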